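/- arXiv:2605.16690 — 4 statements merged into one kernel-verified Lean document; each statement's English description precedes it below -/
import Mathlib

section
/- Let c > 0 be a real number. There exists a constant C > 0 (depending only on c) such that for every natural number T ≥ 2, the sum ∑_{k=1}^{T} (1/k)·exp(−c·(√T − √k)) ≤ 4/(c·√T) + C/T. -/
/-!
Split the sum at `k = T / 2`. For `k ≤ T / 2` we have `√T - √k ≥ √T / 4`, so each term is at
most `exp (-c √T / 4)` and the whole block is at most `T exp (-c √T / 4) = O(1 / T)`. For
`k > T / 2` we have `1 / k ≤ 2 / T` and `√T - √k ≥ (T - k) / (2 √T)`, so the terms are dominated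
by `2 / T` times a geometric series of ratio `r = exp (-c / (2 √T))`, whose sum
`1 / (1 - r) ≤ 1 + 2 √T / c` gives the main term `4 / (c √T)` plus `2 / T`.
-/

open Finset Real

theorem sub_div_two_sqrt_le_sqrt_sub_sqrt {x y : ℝ} (hx : 0 ≤ x) (hxy : x ≤ y) :
    (y - x) / (2 * √y) ≤ √y - √x := by
  rcases (hx.trans hxy).eq_or_lt with rfl | hy
  · simp [le_antisymm hxy hx]
  have hsqrt : √x ≤ √y := sqrt_le_sqrt hxy
  rw [div_le_iff₀ (by positivity)]
  nlinarith [sq_sqrt hx, sq_sqrt hy.le, sqrt_nonneg x]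

theorem mul_exp_neg_mul_sqrt_le {a t : ℝ} (ha : 0 < a) (ht : 0 ≤ t) :
    t * exp (-(a * √t)) ≤ 24 / (a ^ 4 * t) := by
  rcases ht.eq_or_lt with rfl | ht
  · simp
  have h := pow_div_factorial_le_exp (a * √t) (by positivity) 4
  rw [mul_pow, show √t ^ 4 = t ^ 2 by rw [show 4 = 2 * 2 by rfl, pow_mul, sq_sqrt ht.le]] at h
  norm_num [Nat.factorial] at h
  rw [exp_neg, ← div_eq_mul_inv, div_le_div_iff₀ (exp_pos _) (by positivity)]
  nlinarith

theorem one_div_one_sub_exp_neg_le {x : ℝ} (hx : 0 < x) : 1 / (1 - exp (-x)) ≤ 1 + 1 / x := by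
  have hexp : exp (-x) ≤ 1 / (1 + x) := by
    rw [exp_neg, inv_eq_one_div]
    exact one_div_le_one_div_of_le (by positivity) (by linarith [add_one_le_exp x])
  have hgap : x / (1 + x) ≤ 1 - exp (-x) := by
    rw [show x / (1 + x) = 1 - 1 / (1 + x) by field_simp; ring]
    linarith
  calc 1 / (1 - exp (-x)) ≤ 1 / (x / (1 + x)) := one_div_le_one_div_of_le (by positivity) hgap
    _ = 1 + 1 / x := by field_simp; ring

theorem sum_Ioc_pow_sub_le {r : ℝ} (h0 : 0 ≤ r) (h1 : r < 1) (m n : ℕ) :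
    ∑ k ∈ Ioc m n, r ^ (n - k) ≤ 1 / (1 - r) :=
  calc ∑ k ∈ Ioc m n, r ^ (n - k)
      ≤ ∑ k ∈ range (n + 1), r ^ (n + 1 - 1 - k) := by
        refine sum_le_sum_of_subset_of_nonneg (fun k hk => ?_) fun k _ _ => pow_nonneg h0 _
        simp only [mem_Ioc, mem_range] at hk ⊢
        omega
    _ = ∑ j ∈ range (n + 1), r ^ j := sum_range_reflect (r ^ ·) (n + 1)
    _ ≤ r ^ 0 / (1 - r) := range_eq_Ico (n + 1) ▸ geom_sum_Ico_le_of_lt_one h0 h1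
    _ = 1 / (1 - r) := by rw [pow_zero]

noncomputable def sqrtExpWeight (c : ℝ) (T k : ℕ) : ℝ :=
  1 / (k : ℝ) * exp (-c * (√T - √k))

theorem sum_Ioc_zero_half_sqrtExpWeight_le {c : ℝ} (hc : 0 < c) (T : ℕ) :
    ∑ k ∈ Ioc 0 (T / 2), sqrtExpWeight c T k ≤ 6144 / c ^ 4 / T := by
  have hterm : ∀ k ∈ Ioc 0 (T / 2), sqrtExpWeight c T k ≤ exp (-(c / 4 * √T)) := by
    intro k hk
    rw [mem_Ioc] at hk
    have hk1 : (1 : ℝ) ≤ k := by exact_mod_cast hk.1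
    have h2k : 2 * (k : ℝ) ≤ T := by exact_mod_cast (by omega : 2 * k ≤ T)
    have hgap : √T / 4 ≤ √T - √k := by
      refine le_trans ?_ (sub_div_two_sqrt_le_sqrt_sub_sqrt (by positivity) (by linarith))
      have hsT : √T * √T = T := mul_self_sqrt (Nat.cast_nonneg T)
      have hsT_pos : 0 < √(T : ℝ) := sqrt_pos.mpr (by linarith)
      rw [le_div_iff₀ (by positivity)]
      nlinarith
    calc sqrtExpWeight c T k ≤ 1 * exp (-c * (√T - √k)) := by
          unfold sqrtExpWeight
          gcongr
          exact div_le_one_of_le₀ hk1 (by positivity)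
      _ ≤ exp (-(c / 4 * √T)) := by
          rw [one_mul, exp_le_exp]
          nlinarith
  calc ∑ k ∈ Ioc 0 (T / 2), sqrtExpWeight c T k
      ≤ (T / 2 : ℕ) * exp (-(c / 4 * √T)) := by
        simpa using sum_le_sum hterm
    _ ≤ T * exp (-(c / 4 * √T)) := by gcongr; exact_mod_cast Nat.div_le_self T 2
    _ ≤ 24 / ((c / 4) ^ 4 * T) := mul_exp_neg_mul_sqrt_le (by positivity) (Nat.cast_nonneg T)
    _ = 6144 / c ^ 4 / T := by rw [div_div]; ring

theorem exp_neg_mul_sqrt_sub_sqrt_le_pow {c : ℝ} (hc : 0 < c) {k T : ℕ} (hkT : k ≤ T) :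
    exp (-c * (√T - √k)) ≤ exp (-(c / (2 * √T))) ^ (T - k) := by
  rw [← exp_nat_mul, exp_le_exp, Nat.cast_sub hkT]
  calc -c * (√T - √k) ≤ -c * ((T - k) / (2 * √T)) :=
        mul_le_mul_of_nonpos_left
          (sub_div_two_sqrt_le_sqrt_sub_sqrt (Nat.cast_nonneg k) (Nat.cast_le.mpr hkT))
          (neg_nonpos.mpr hc.le)
    _ = (T - k) * -(c / (2 * √T)) := by ring

theorem sum_Ioc_half_sqrtExpWeight_le {c : ℝ} (hc : 0 < c) {T : ℕ} (hT : 0 < T) :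
    ∑ k ∈ Ioc (T / 2) T, sqrtExpWeight c T k ≤ 4 / (c * √T) + 2 / T := by
  have hT' : (0 : ℝ) < T := by exact_mod_cast hT
  set r := exp (-(c / (2 * √T)))
  have hterm : ∀ k ∈ Ioc (T / 2) T, sqrtExpWeight c T k ≤ 2 / T * r ^ (T - k) := by
    intro k hk
    rw [mem_Ioc] at hk
    have hk0 : (0 : ℝ) < k := by exact_mod_cast (by omega : 0 < k)
    have h2k : (T : ℝ) ≤ 2 * k := by exact_mod_cast (by omega : T ≤ 2 * k)
    have hinv : 1 / (k : ℝ) ≤ 2 / T := by rw [div_le_div_iff₀ hk0 hT']; linarith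
    exact mul_le_mul hinv (exp_neg_mul_sqrt_sub_sqrt_le_pow hc hk.2) (exp_nonneg _) (by positivity)
  have hr : r < 1 := exp_lt_one_iff.mpr (neg_lt_zero.mpr (by positivity))
  calc ∑ k ∈ Ioc (T / 2) T, sqrtExpWeight c T k
      ≤ 2 / T * ∑ k ∈ Ioc (T / 2) T, r ^ (T - k) := by rw [mul_sum]; exact sum_le_sum hterm
    _ ≤ 2 / T * (1 + 1 / (c / (2 * √T))) := by
        gcongr
        exact (sum_Ioc_pow_sub_le (exp_nonneg _) hr _ _).trans
          (one_div_one_sub_exp_neg_le (by positivity))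
    _ = 4 / (c * √T) + 2 / T := by
        have hsq : √T ^ 2 = (T : ℝ) := sq_sqrt hT'.le
        have : 0 < √T := by positivity
        field_simp
        linear_combination 4 * hsq

/-- Square-Root Exponentially Weighted Sum Bound (Lemma 3), with an explicit
existential constant in place of the `O(1/T)` term. -/
theorem sqrt_exp_weighted_sum_bound (c : ℝ) (hc : 0 < c) :
    ∃ C : ℝ, 0 < C ∧ ∀ T : ℕ, 2 ≤ T →
      ∑ k ∈ Finset.Icc 1 T, (1 / (k : ℝ)) * Real.exp (-c * (Real.sqrt T - Real.sqrt k))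
        ≤ 4 / (c * Real.sqrt T) + C / T := by
  refine ⟨2 + 6144 / c ^ 4, by positivity, fun T hT => ?_⟩
  change ∑ k ∈ Icc 1 T, sqrtExpWeight c T k ≤ _
  rw [show Icc 1 T = Ioc 0 T from Icc_add_one_left_eq_Ioc 0 T,
    ← sum_Ioc_consecutive _ (Nat.zero_le (T / 2)) (Nat.div_le_self T 2)]
  linarith [sum_Ioc_zero_half_sqrtExpWeight_le hc T, sum_Ioc_half_sqrtExpWeight_le hc (by omega : 0 < T),
    show (2 + 6144 / c ^ 4) / (T : ℝ) = 2 / T + 6144 / c ^ 4 / T by ring]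
end

section
/- Let H be a real inner product space, let C and Γ be positive natural numbers, let L_eff ≥ 0, η_l ≥ 0, G ≥ 0 be reals, let p_1,…,p_C be nonnegative reals with ∑_{c=1}^{C} p_c = 1, and for each c let h_c : H → H be L_eff-Lipschitz. Fix θ ∈ H and for each c define a sequence θ_c^0 = θ, θ_c^{k+1} = θ_c^k − η_l·g_c^k where each g_c^k ∈ H satisfies ‖g_c^k‖ ≤ G. Then ‖∑_{c=1}^{C} p_c · (1/Γ)·∑_{k=0}^{Γ−1} (h_c(θ_c^k) − h_c(θ))‖² ≤ L_eff²·η_l²·G²·(Γ−1)(2Γ−1)/6. -/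
/-- Deterministic core of the Bounded Client Drift lemma (Lemma 1). -/
theorem bounded_client_drift
    (H : Type*) [NormedAddCommGroup H] [InnerProductSpace ℝ H]
    (C Γ : ℕ) (hC : 0 < C) (hΓ : 0 < Γ)
    (Leff ηl G : ℝ) (hLeff : 0 ≤ Leff) (hηl : 0 ≤ ηl) (hG : 0 ≤ G)
    (p : ℕ → ℝ) (hp : ∀ c, 0 ≤ p c) (hpsum : ∑ c ∈ Finset.range C, p c = 1)
    (h : ℕ → H → H)
    (hLip : ∀ c ∈ Finset.range C, ∀ x y : H, ‖h c x - h c y‖ ≤ Leff * ‖x - y‖)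
    (θ : H) (g : ℕ → ℕ → H) (hg : ∀ c k, ‖g c k‖ ≤ G)
    (θc : ℕ → ℕ → H) (hθ0 : ∀ c, θc c 0 = θ)
    (hθstep : ∀ c k, θc c (k + 1) = θc c k - ηl • g c k) :
    ‖∑ c ∈ Finset.range C,
        p c • (((Γ : ℝ)⁻¹) • ∑ k ∈ Finset.range Γ, (h c (θc c k) - h c θ))‖ ^ 2
      ≤ Leff ^ 2 * ηl ^ 2 * G ^ 2 * ((Γ : ℝ) - 1) * (2 * (Γ : ℝ) - 1) / 6 := by
  have hdrift : ∀ c k, ‖θc c k - θ‖ ≤ ηl * k * G := by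
    intro c k
    induction k with
    | zero => simp [hθ0]
    | succ k ih =>
      have : θc c (k + 1) - θ = (θc c k - θ) - ηl • g c k := by
        rw [hθstep]; abel
      rw [this]
      calc ‖(θc c k - θ) - ηl • g c k‖ ≤ ‖θc c k - θ‖ + ‖ηl • g c k‖ :=
            norm_sub_le _ _
        _ ≤ ηl * k * G + ηl * G := by
            refine add_le_add ih ?_
            rw [norm_smul, Real.norm_of_nonneg hηl]
            exact mul_le_mul_of_nonneg_left (hg c k) hηl
        _ = ηl * (k + 1 : ℕ) * G := by push_cast; ring
  -- bound the inner sums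
  have hsumk : ∀ c ∈ Finset.range C,
      ‖∑ k ∈ Finset.range Γ, (h c (θc c k) - h c θ)‖
        ≤ Leff * ηl * G * ((Γ : ℝ) * ((Γ : ℝ) - 1) / 2) := by
    intro c hc
    calc ‖∑ k ∈ Finset.range Γ, (h c (θc c k) - h c θ)‖
        ≤ ∑ k ∈ Finset.range Γ, ‖h c (θc c k) - h c θ‖ := norm_sum_le _ _
      _ ≤ ∑ k ∈ Finset.range Γ, Leff * ηl * (k : ℝ) * G := by
          refine Finset.sum_le_sum fun k _ => ?_
          calc ‖h c (θc c k) - h c θ‖ ≤ Leff * ‖θc c k - θ‖ := hLip c hc _ _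
            _ ≤ Leff * (ηl * k * G) :=
                mul_le_mul_of_nonneg_left (hdrift c k) hLeff
            _ = Leff * ηl * (k : ℝ) * G := by ring
      _ = Leff * ηl * G * ∑ k ∈ Finset.range Γ, (k : ℝ) := by
          rw [Finset.mul_sum]; exact Finset.sum_congr rfl fun k _ => by ring
      _ = Leff * ηl * G * ((Γ : ℝ) * ((Γ : ℝ) - 1) / 2) := by
          congr 1
          have h1 : 1 ≤ Γ := hΓ
          have h2 := congrArg (Nat.cast : ℕ → ℝ) (Finset.sum_range_id_mul_two Γ)
          push_cast [Nat.cast_sub h1] at h2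
          linarith
  set B := Leff * ηl * G * (((Γ : ℝ) - 1) / 2) with hB
  have hΓ1 : (1 : ℝ) ≤ (Γ : ℝ) := by exact_mod_cast hΓ
  have hΓpos : (0 : ℝ) < (Γ : ℝ) := by positivity
  have hnorm : ‖∑ c ∈ Finset.range C,
      p c • (((Γ : ℝ)⁻¹) • ∑ k ∈ Finset.range Γ, (h c (θc c k) - h c θ))‖ ≤ B := by
    calc ‖∑ c ∈ Finset.range C,
        p c • (((Γ : ℝ)⁻¹) • ∑ k ∈ Finset.range Γ, (h c (θc c k) - h c θ))‖
        ≤ ∑ c ∈ Finset.range C,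
          ‖p c • (((Γ : ℝ)⁻¹) • ∑ k ∈ Finset.range Γ, (h c (θc c k) - h c θ))‖ :=
          norm_sum_le _ _
      _ ≤ ∑ c ∈ Finset.range C, p c * B := by
          refine Finset.sum_le_sum fun c hc => ?_
          rw [norm_smul, norm_smul, Real.norm_of_nonneg (hp c),
            Real.norm_of_nonneg (by positivity : (0:ℝ) ≤ (Γ : ℝ)⁻¹)]
          refine mul_le_mul_of_nonneg_left ?_ (hp c)
          have := hsumk c hc
          calc (Γ : ℝ)⁻¹ * ‖∑ k ∈ Finset.range Γ, (h c (θc c k) - h c θ)‖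
              ≤ (Γ : ℝ)⁻¹ * (Leff * ηl * G * ((Γ : ℝ) * ((Γ : ℝ) - 1) / 2)) :=
                mul_le_mul_of_nonneg_left this (by positivity)
            _ = B := by field_simp [hB]; ring
      _ = B := by rw [← Finset.sum_mul, hpsum, one_mul]
  have hBnn : 0 ≤ B := by
    have : (0:ℝ) ≤ ((Γ : ℝ) - 1) / 2 := by linarith
    positivity
  have hsq : ‖∑ c ∈ Finset.range C,
      p c • (((Γ : ℝ)⁻¹) • ∑ k ∈ Finset.range Γ, (h c (θc c k) - h c θ))‖ ^ 2
      ≤ B ^ 2 := by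
    exact pow_le_pow_left₀ (norm_nonneg _) hnorm 2
  refine hsq.trans ?_
  rw [hB]
  nlinarith [sq_nonneg (Leff * ηl * G), sq_nonneg ((Γ:ℝ) - 1),
    mul_nonneg (mul_nonneg (mul_nonneg hLeff hηl) hG) (by linarith : (0:ℝ) ≤ (Γ:ℝ) - 1),
    sq_nonneg (Leff * ηl * G * ((Γ:ℝ) - 1))]
end

section
/- Let Γ ≥ 1 be a natural number, μ' > 0 real, and for each natural j set η_j = 1/√(Γ·(j+1)). Assume μ'·η_j ≤ 1 for all j. Then for all natural numbers t, T with t + 1 ≤ T, the product ∏_{j=t+1}^{T−1} (1 − μ'·η_j) ≤ exp(−(2μ'/√Γ)·(√(T+1) − √(t+2))). -/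
lemma sqrt_step_aux (x : ℝ) (hx : 1 ≤ x) :
    2 * (Real.sqrt (x + 1) - Real.sqrt x) ≤ 1 / Real.sqrt x := by
  have hs1 : Real.sqrt (x + 1) ^ 2 = x + 1 := Real.sq_sqrt (by linarith)
  have hs2 : Real.sqrt x ^ 2 = x := Real.sq_sqrt (by linarith)
  have hp : 0 < Real.sqrt x := Real.sqrt_pos.2 (by linarith)
  rw [le_div_iff₀ hp]
  nlinarith [sq_nonneg (Real.sqrt (x + 1) - Real.sqrt x)]

/-- Contraction-factor bound in the proof of Theorem 1 (Term A3). -/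
theorem contraction_factor_bound (Γ : ℕ) (hΓ : 1 ≤ Γ) (μ' : ℝ) (hμ' : 0 < μ')
    (η : ℕ → ℝ) (hη : ∀ j : ℕ, η j = 1 / Real.sqrt ((Γ : ℝ) * (j + 1)))
    (hμη : ∀ j : ℕ, μ' * η j ≤ 1) :
    ∀ t T : ℕ, t + 1 ≤ T →
      ∏ j ∈ Finset.Ico (t + 1) T, (1 - μ' * η j)
        ≤ Real.exp (-(2 * μ' / Real.sqrt Γ) * (Real.sqrt (T + 1) - Real.sqrt (t + 2))) := by
  intro t T hT
  have hΓpos : (0:ℝ) < Real.sqrt Γ := Real.sqrt_pos.2 (by exact_mod_cast Nat.lt_of_lt_of_le Nat.zero_lt_one hΓ)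
  induction T, hT using Nat.le_induction with
  | base =>
    simp only [Finset.Ico_self, Finset.prod_empty]
    push_cast
    rw [show ((t:ℝ) + 1 + 1) = ((t:ℝ) + 2) by ring, sub_self, mul_zero, Real.exp_zero]
  | succ T hT ih =>
    push_cast
    rw [Finset.prod_Ico_succ_top hT]
    have hfac : (0:ℝ) ≤ 1 - μ' * η T := by linarith [hμη T]
    have hexp : 1 - μ' * η T ≤ Real.exp (-(μ' * η T)) := by
      have := Real.add_one_le_exp (-(μ' * η T)); linarith
    have hprod_le : ∏ j ∈ Finset.Ico (t + 1) T, (1 - μ' * η j)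
        ≤ Real.exp (-(2 * μ' / Real.sqrt Γ) * (Real.sqrt (T + 1) - Real.sqrt (t + 2))) := ih
    calc (∏ j ∈ Finset.Ico (t + 1) T, (1 - μ' * η j)) * (1 - μ' * η T)
        ≤ Real.exp (-(2 * μ' / Real.sqrt Γ) * (Real.sqrt (T + 1) - Real.sqrt (t + 2)))
            * Real.exp (-(μ' * η T)) := by
          apply mul_le_mul hprod_le hexp hfac (le_of_lt (Real.exp_pos _))
      _ ≤ Real.exp (-(2 * μ' / Real.sqrt Γ) * (Real.sqrt ((T:ℝ) + 1 + 1) - Real.sqrt (t + 2))) := by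
          rw [← Real.exp_add]
          apply Real.exp_le_exp.2
          -- need: 2μ'/√Γ * (√(T+2) - √(T+1)) ≤ μ' * η T
          have hsqrtT : (0:ℝ) < Real.sqrt ((T:ℝ) + 1) := Real.sqrt_pos.2 (by positivity)
          have hηT : η T = 1 / (Real.sqrt Γ * Real.sqrt ((T:ℝ) + 1)) := by
            rw [hη T, Real.sqrt_mul (by positivity)]
          have hstep := sqrt_step_aux ((T:ℝ) + 1) (by linarith [Nat.cast_nonneg (α := ℝ) T])
          have hkey : 2 * μ' / Real.sqrt Γ * (Real.sqrt ((T:ℝ) + 1 + 1) - Real.sqrt ((T:ℝ) + 1))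
              ≤ μ' * η T := by
            rw [hηT]
            have h := mul_le_mul_of_nonneg_left hstep
              (by positivity : (0:ℝ) ≤ μ' / Real.sqrt Γ)
            calc 2 * μ' / Real.sqrt Γ * (Real.sqrt ((T:ℝ) + 1 + 1) - Real.sqrt ((T:ℝ) + 1))
                = μ' / Real.sqrt Γ * (2 * (Real.sqrt ((T:ℝ) + 1 + 1) - Real.sqrt ((T:ℝ) + 1))) := by
                  ring
              _ ≤ μ' / Real.sqrt Γ * (1 / Real.sqrt ((T:ℝ) + 1)) := h
              _ = μ' * (1 / (Real.sqrt Γ * Real.sqrt ((T:ℝ) + 1))) := by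
                  field_simp
          nlinarith [hkey]
end

section
/- Let H be a real Hilbert space and F : H → ℝ a differentiable function whose gradient ∇F is L-Lipschitz for some L ≥ 0. Let F* ∈ ℝ and μ > 0 be such that F(θ) ≥ F* and (1/2)·‖∇F(θ)‖² ≥ μ·(F(θ) − F*) for all θ ∈ H. Fix θ ∈ H, η > 0, G ≥ 0, and vectors U, B, E ∈ H with U = ∇F(θ) − B + E and ‖U‖ ≤ G, and set θ' = θ − η·U. Then F(θ') − F* ≤ (1 − η·μ)·(F(θ) − F*) + η·‖B‖² + η·‖E‖² + (L·η²·G²)/2. -/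
/-!
The descent lemma for an `L`-smooth `F` bounds
`F (θ - η U)` by `F θ - η ⟪∇F θ, U⟫ + L η² ‖U‖² / 2`. Writing `U = ∇F θ - B + E` and applying
`|⟪u, v⟫| ≤ ‖u‖² / 4 + ‖v‖²` to the bias and drift cross terms leaves at least
`‖∇F θ‖² / 2 - ‖B‖² - ‖E‖²` of the inner product, and the Polyak–Łojasiewicz inequality turns
`‖∇F θ‖² / 2` into `μ (F θ - F*)`.
-/

open scoped RealInnerProductSpace

section Descent

variable {E : Type*} [NormedAddCommGroup E] [NormedSpace ℝ E] {f : E → ℝ} {L : ℝ}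

theorem image_add_le_of_fderiv_lipschitz (hf : Differentiable ℝ f)
    (hlip : ∀ x y, ‖fderiv ℝ f x - fderiv ℝ f y‖ ≤ L * ‖x - y‖) (x v : E) :
    f (x + v) ≤ f x + fderiv ℝ f x v + L / 2 * ‖v‖ ^ 2 := by
  -- Along the segment `x + t • v`, the gap between `f` and the paraboloid is antitone.
  set φ : ℝ → ℝ := fun t ↦ f (x + t • v) - t * fderiv ℝ f x v - L / 2 * ‖v‖ ^ 2 * t ^ 2
  have hφ : ∀ t, HasDerivAt φ
      ((fderiv ℝ f (x + t • v) - fderiv ℝ f x) v - L * ‖v‖ ^ 2 * t) t := by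
    intro t
    have hline : HasDerivAt (fun t : ℝ ↦ x + t • v) v t := by
      simpa using ((hasDerivAt_id t).smul_const v).const_add x
    have hcomp : HasDerivAt (fun t : ℝ ↦ f (x + t • v)) (fderiv ℝ f (x + t • v) v) t :=
      (hf _).hasFDerivAt.comp_hasDerivAt t hline
    refine ((hcomp.sub ((hasDerivAt_id t).mul_const (fderiv ℝ f x v))).sub
      ((hasDerivAt_pow 2 t).const_mul (L / 2 * ‖v‖ ^ 2))).congr_deriv ?_
    simp only [_root_.sub_apply]
    ring
  have hφ' : ∀ t ∈ interior (Set.Icc (0 : ℝ) 1),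
      (fderiv ℝ f (x + t • v) - fderiv ℝ f x) v - L * ‖v‖ ^ 2 * t ≤ 0 := by
    intro t ht
    have ht0 : 0 ≤ t := (interior_subset ht : t ∈ Set.Icc (0 : ℝ) 1).1
    have hderiv : ‖fderiv ℝ f (x + t • v) - fderiv ℝ f x‖ ≤ L * (t * ‖v‖) := by
      simpa [norm_smul, abs_of_nonneg ht0] using hlip (x + t • v) x
    refine sub_nonpos.mpr ?_
    calc (fderiv ℝ f (x + t • v) - fderiv ℝ f x) v
        ≤ ‖fderiv ℝ f (x + t • v) - fderiv ℝ f x‖ * ‖v‖ :=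
          (Real.le_norm_self _).trans (ContinuousLinearMap.le_opNorm _ _)
      _ ≤ L * (t * ‖v‖) * ‖v‖ := by gcongr
      _ = L * ‖v‖ ^ 2 * t := by ring
  have hanti : AntitoneOn φ (Set.Icc 0 1) :=
    antitoneOn_of_hasDerivWithinAt_nonpos (convex_Icc 0 1)
      (fun t _ ↦ (hφ t).continuousAt.continuousWithinAt)
      (fun t _ ↦ (hφ t).hasDerivWithinAt) hφ'
  have hφ10 : φ 1 ≤ φ 0 := hanti (by simp) (by simp) zero_le_one
  norm_num [φ] at hφ10
  linarith

end Descent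

section Hilbert

variable {H : Type*} [NormedAddCommGroup H] [InnerProductSpace ℝ H]

theorem norm_fderiv_sub_eq_norm_gradient_sub [CompleteSpace H] (f : H → ℝ) (x y : H) :
    ‖fderiv ℝ f x - fderiv ℝ f y‖ = ‖gradient f x - gradient f y‖ := by
  rw [← toDual_gradient, ← toDual_gradient, ← map_sub, LinearIsometryEquiv.norm_map]

theorem image_add_le_of_gradient_lipschitz [CompleteSpace H] {f : H → ℝ} {L : ℝ}
    (hf : Differentiable ℝ f) (hlip : ∀ x y, ‖gradient f x - gradient f y‖ ≤ L * ‖x - y‖)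
    (x v : H) : f (x + v) ≤ f x + ⟪gradient f x, v⟫ + L / 2 * ‖v‖ ^ 2 := by
  rw [inner_gradient_left]
  exact image_add_le_of_fderiv_lipschitz hf
    (fun x y ↦ (norm_fderiv_sub_eq_norm_gradient_sub f x y).trans_le (hlip x y)) x v

theorem real_inner_le_norm_sq_div_four_add_norm_sq (u v : H) :
    ⟪u, v⟫ ≤ ‖u‖ ^ 2 / 4 + ‖v‖ ^ 2 := by
  nlinarith [real_inner_le_norm u v, sq_nonneg (‖u‖ / 2 - ‖v‖)]

theorem norm_sq_div_two_sub_le_real_inner_sub_add (g b e : H) :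
    ‖g‖ ^ 2 / 2 - ‖b‖ ^ 2 - ‖e‖ ^ 2 ≤ ⟪g, g - b + e⟫ := by
  have hb := real_inner_le_norm_sq_div_four_add_norm_sq g b
  have he := real_inner_le_norm_sq_div_four_add_norm_sq g (-e)
  rw [inner_neg_right, norm_neg] at he
  rw [inner_add_right, inner_sub_right, real_inner_self_eq_norm_sq]
  linarith

end Hilbert

theorem per_round_progress_general
    (H : Type*) [NormedAddCommGroup H] [InnerProductSpace ℝ H] [CompleteSpace H]
    (F : H → ℝ) (hF : Differentiable ℝ F)
    (L : ℝ) (hL : 0 ≤ L)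
    (hgradLip : ∀ x y : H, ‖gradient F x - gradient F y‖ ≤ L * ‖x - y‖)
    (Fstar μ : ℝ)
    (hPL : ∀ θ : H, (1 / 2) * ‖gradient F θ‖ ^ 2 ≥ μ * (F θ - Fstar))
    (θ : H) (η : ℝ) (hη : 0 < η) (G : ℝ)
    (U B E : H) (hU : U = gradient F θ - B + E) (hUnorm : ‖U‖ ≤ G) :
    F (θ - η • U) - Fstar
      ≤ (1 - η * μ) * (F θ - Fstar) + η * ‖B‖ ^ 2 + η * ‖E‖ ^ 2 + L * η ^ 2 * G ^ 2 / 2 := by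
  have hdescent := image_add_le_of_gradient_lipschitz hF hgradLip θ (-(η • U))
  rw [← sub_eq_add_neg, inner_neg_right, real_inner_smul_right, norm_neg, norm_smul,
    Real.norm_eq_abs, abs_of_pos hη] at hdescent
  have hinner : ‖gradient F θ‖ ^ 2 / 2 - ‖B‖ ^ 2 - ‖E‖ ^ 2 ≤ ⟪gradient F θ, U⟫ :=
    hU ▸ norm_sq_div_two_sub_le_real_inner_sub_add _ _ _
  have hstep : L / 2 * (η * ‖U‖) ^ 2 ≤ L * η ^ 2 * G ^ 2 / 2 :=
    calc L / 2 * (η * ‖U‖) ^ 2 ≤ L / 2 * (η * G) ^ 2 := by gcongr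
      _ = L * η ^ 2 * G ^ 2 / 2 := by ring
  linarith [mul_le_mul_of_nonneg_left hinner hη.le, mul_le_mul_of_nonneg_left (hPL θ) hη.le]

/-- Deterministic per-round progress inequality in the proof of Theorem 1. -/
theorem per_round_progress
    (H : Type*) [NormedAddCommGroup H] [InnerProductSpace ℝ H] [CompleteSpace H]
    (F : H → ℝ) (hF : Differentiable ℝ F)
    (L : ℝ) (hL : 0 ≤ L)
    (hgradLip : ∀ x y : H, ‖gradient F x - gradient F y‖ ≤ L * ‖x - y‖)
    (Fstar μ : ℝ) (hμ : 0 < μ)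
    (hFlb : ∀ θ : H, Fstar ≤ F θ)
    (hPL : ∀ θ : H, (1 / 2) * ‖gradient F θ‖ ^ 2 ≥ μ * (F θ - Fstar))
    (θ : H) (η : ℝ) (hη : 0 < η) (G : ℝ) (hG : 0 ≤ G)
    (U B E : H) (hU : U = gradient F θ - B + E) (hUnorm : ‖U‖ ≤ G) :
    F (θ - η • U) - Fstar
      ≤ (1 - η * μ) * (F θ - Fstar) + η * ‖B‖ ^ 2 + η * ‖E‖ ^ 2 + L * η ^ 2 * G ^ 2 / 2 :=
  per_round_progress_general H F hF L hL hgradLip Fstar μ hPL θ η hη G U B E hU hUnorm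
end
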